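/- arXiv:2012.10740 — 5 statements merged into one kernel-verified Lean document; each statement's English description precedes it below -/
import Mathlib

section
/- (Lemma 2.1, second part) For any real sequence w_1, …, w_n, the L1_R kernels are positive definite in the sense that 2 ∑_{k=1}^{n} w_k ∑_{j=1}^{k} a_{k−j}^{(k)} w_j ≥ ∑_{k=1}^{n} ( q_{n−k}^{(n)} + ∑_{j=1}^{k} a_{k−j}^{(k)} ) w_k², and the right-hand side is strictly positive if the w_k are not all zero. -/
open Finset intervalIntegral Matrix

noncomputable def omegaK (μ s : ℝ) : ℝ := s ^ (μ - 1) / Real.Gamma μ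

noncomputable def qK (α : ℝ) (t : ℕ → ℝ) (n k : ℕ) : ℝ :=
  ∫ s in (t (k - 1))..(t k), omegaK α (t n - s)

noncomputable def aK (α : ℝ) (t : ℕ → ℝ) (n k : ℕ) : ℝ :=
  if k = n then qK α t n n else qK α t n k - qK α t (n - 1) k

noncomputable def thetaAux (A : ℕ → ℕ → ℝ) (n : ℕ) : ℕ → ℕ → ℝ
  | 0, m => if m = 0 then 1 / A n n else 0
  | M + 1, m =>
      if m ≤ M then thetaAux A n M m
      else -(1 / A (n - (M + 1)) (n - (M + 1))) *
        ∑ ℓ ∈ Finset.range (M + 1), thetaAux A n M ℓ * A (n - ℓ) (n - (M + 1))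

noncomputable def thetaK (α : ℝ) (t : ℕ → ℝ) (n k : ℕ) : ℝ :=
  thetaAux (aK α t) n (n - k) (n - k)

noncomputable def Hfun (a b : ℝ) : ℝ := a ^ 3 / 3 + a * b ^ 2 / 2 + b ^ 3 / 6 - (a + b) / 2

noncomputable def Ffun (u : ℝ) : ℝ := (1 - u ^ 2) ^ 2 / 4

noncomputable def zetaK (α : ℝ) (t : ℕ → ℝ) (n j : ℕ) : ℝ :=
  if j = n then thetaK α t n n else thetaK α t n j - thetaK α t n (j + 1)

/-! The off-diagonal L1_R kernels `a_{k-j}^{(k)}`, `j < k`, are non-positive because the increments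
of the concave function `s ↦ s ^ α` decrease. For a lower-triangular kernel with this sign pattern,
`2 w_k w_j ≤ w_k² + w_j²` bounds the form `2 ∑_k w_k ∑_{j ≤ k} a_{kj} w_j` from below by
`∑_k (row sum + column sum) w_k²`. The column sum `∑_{i=k}^n a_{ik}` telescopes to
`q_{n-k}^{(n)} > 0`, and the row sum is `((t_k - t_0)^α - (t_{k-1} - t_0)^α) / Γ(1 + α) ≥ 0`. -/

theorem ConcaveOn.map_add_sub_map_le {s : Set ℝ} {f : ℝ → ℝ} (hf : ConcaveOn ℝ s f)
    {x y δ : ℝ} (hx : x ∈ s) (hyδ : y + δ ∈ s) (hxy : x ≤ y) (hδ : 0 ≤ δ) :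
    f (y + δ) - f y ≤ f (x + δ) - f x := by
  obtain hlen | hlen := (show x ≤ y + δ by linarith).eq_or_lt
  · obtain rfl : y = x := by linarith
    obtain rfl : δ = 0 := by linarith
    simp
  -- `x + δ` and `y` are the two convex combinations of `x` and `y + δ` with swapped weights
  set ℓ := y + δ - x
  have hℓ : 0 < ℓ := by linarith
  have hsum : (y - x) / ℓ + δ / ℓ = 1 := by field_simp; ring
  have h₁ := hf.2 hx hyδ (div_nonneg (by linarith) hℓ.le) (div_nonneg hδ hℓ.le) hsum
  have h₂ := hf.2 hx hyδ (div_nonneg hδ hℓ.le) (div_nonneg (by linarith) hℓ.le)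
    ((add_comm _ _).trans hsum)
  simp only [smul_eq_mul] at h₁ h₂
  rw [show (y - x) / ℓ * x + δ / ℓ * (y + δ) = x + δ by field_simp; ring] at h₁
  rw [show δ / ℓ * x + (y - x) / ℓ * (y + δ) = y by field_simp; ring] at h₂
  have hf_split : f x + f (y + δ) = ((y - x) / ℓ * f x + δ / ℓ * f (y + δ))
      + (δ / ℓ * f x + (y - x) / ℓ * f (y + δ)) := by
    linear_combination (f x + f (y + δ)) * hsum.symm
  linarith

theorem Finset.sum_Ioc_sub_pred {M : Type*} [AddCommGroup M] (f : ℕ → M) {k n : ℕ}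
    (hkn : k ≤ n) : ∑ i ∈ Ioc k n, (f i - f (i - 1)) = f n - f k := by
  induction n, hkn using Nat.le_induction with
  | base => simp
  | succ n hkn ih =>
    rw [sum_Ioc_succ_top hkn, ih, Nat.add_sub_cancel]
    abel

theorem sum_mul_sq_pos {ι : Type*} {s : Finset ι} {c w : ι → ℝ} (hc : ∀ k ∈ s, 0 < c k)
    (hw : ∃ k ∈ s, w k ≠ 0) : 0 < ∑ k ∈ s, c k * w k ^ 2 := by
  obtain ⟨k, hk, hwk⟩ := hw
  exact sum_pos' (fun i hi => by have := hc i hi; positivity)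
    ⟨k, hk, mul_pos (hc k hk) (by positivity)⟩

theorem sum_diag_add_col_add_row_mul_sq_le {A : ℕ → ℕ → ℝ} {n : ℕ}
    (hA : ∀ k ∈ Icc 1 n, ∀ j ∈ Ico 1 k, A k j ≤ 0) (w : ℕ → ℝ) :
    ∑ k ∈ Icc 1 n, (A k k + ∑ i ∈ Ioc k n, A i k + ∑ j ∈ Icc 1 k, A k j) * w k ^ 2
      ≤ 2 * ∑ k ∈ Icc 1 n, w k * ∑ j ∈ Icc 1 k, A k j * w j := by
  have hsplit : 2 * ∑ k ∈ Icc 1 n, w k * ∑ j ∈ Icc 1 k, A k j * w j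
      = ∑ k ∈ Icc 1 n, ∑ j ∈ Icc 1 k, A k j * (2 * w k * w j - w k ^ 2)
        + ∑ k ∈ Icc 1 n, (∑ j ∈ Icc 1 k, A k j) * w k ^ 2 := by
    simp only [mul_sum, sum_mul, ← sum_add_distrib]
    refine sum_congr rfl fun k _ => sum_congr rfl fun j _ => by ring
  have hrow : ∀ k ∈ Icc 1 n, A k k * w k ^ 2 + ∑ j ∈ Ico 1 k, A k j * w j ^ 2
      ≤ ∑ j ∈ Icc 1 k, A k j * (2 * w k * w j - w k ^ 2) := by
    intro k hk
    rw [← Ico_insert_right (mem_Icc.1 hk).1, sum_insert right_notMem_Ico]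
    refine add_le_add (le_of_eq (by ring)) (sum_le_sum fun j hj => ?_)
    exact mul_le_mul_of_nonpos_left (by nlinarith [sq_nonneg (w j - w k)]) (hA k hk j hj)
  have hswap : ∑ k ∈ Icc 1 n, ∑ j ∈ Ico 1 k, A k j * w j ^ 2
      = ∑ k ∈ Icc 1 n, (∑ i ∈ Ioc k n, A i k) * w k ^ 2 := by
    simp only [sum_mul]
    exact sum_comm' fun k j => by simp only [mem_Icc, mem_Ico, mem_Ioc]; omega
  calc ∑ k ∈ Icc 1 n, (A k k + ∑ i ∈ Ioc k n, A i k + ∑ j ∈ Icc 1 k, A k j) * w k ^ 2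
      = ∑ k ∈ Icc 1 n, (A k k * w k ^ 2 + ∑ j ∈ Ico 1 k, A k j * w j ^ 2)
        + ∑ k ∈ Icc 1 n, (∑ j ∈ Icc 1 k, A k j) * w k ^ 2 := by
        simp only [sum_add_distrib, add_mul, hswap]
    _ ≤ _ := by rw [hsplit]; gcongr with k hk; exact hrow k hk

theorem qK_eq {α : ℝ} (hα : 0 < α) (t : ℕ → ℝ) (n k : ℕ) :
    qK α t n k = ((t n - t (k - 1)) ^ α - (t n - t k) ^ α) / (α * Real.Gamma α) := by
  unfold qK omegaK
  rw [integral_div, integral_comp_sub_left (· ^ (α - 1)),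
    integral_rpow (Or.inl (by linarith)), sub_add_cancel, div_div]

theorem qK_pos {α : ℝ} (hα : 0 < α) {t : ℕ → ℝ} {n k : ℕ} (hk : t (k - 1) < t k)
    (hkn : t k ≤ t n) : 0 < qK α t n k := by
  rw [qK_eq hα]
  have := Real.rpow_lt_rpow (sub_nonneg.2 hkn) (sub_lt_sub_left hk (t n)) hα
  exact div_pos (sub_pos.2 this) (mul_pos hα (Real.Gamma_pos_of_pos hα))

theorem aK_nonpos {α : ℝ} (hα0 : 0 < α) (hα1 : α < 1) {t : ℕ → ℝ} {k j : ℕ}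
    (ht : MonotoneOn t (Set.Iic k)) (hjk : j < k) : aK α t k j ≤ 0 := by
  have hmono : ∀ {a b}, a ≤ b → b ≤ k → t a ≤ t b := fun hab hb =>
    ht (Set.mem_Iic.2 (hab.trans hb)) (Set.mem_Iic.2 hb) hab
  -- concavity of `x ↦ x ^ α`, with increment `δ = τ_j` taken at `t_{k-1} - t_j ≤ t_k - t_j`
  have key := (Real.concaveOn_rpow hα0.le hα1.le).map_add_sub_map_le
    (x := t (k - 1) - t j) (y := t k - t j) (δ := t j - t (j - 1))
    (sub_nonneg.2 (hmono (by omega) (by omega)))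
    (Set.mem_Ici.2 (by linarith [hmono (Nat.sub_le j 1) hjk.le, hmono hjk.le le_rfl]))
    (by linarith [hmono (Nat.sub_le k 1) le_rfl])
    (sub_nonneg.2 (hmono (Nat.sub_le j 1) hjk.le))
  simp only [sub_add_sub_cancel] at key
  rw [aK, if_neg hjk.ne, qK_eq hα0, qK_eq hα0, ← sub_div]
  exact div_nonpos_of_nonpos_of_nonneg (by linarith)
    (mul_pos hα0 (Real.Gamma_pos_of_pos hα0)).le

theorem aK_add_sum_Ioc_aK (α : ℝ) (t : ℕ → ℝ) {k n : ℕ} (hkn : k ≤ n) :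
    aK α t k k + ∑ i ∈ Ioc k n, aK α t i k = qK α t n k := by
  have hcol : ∀ i ∈ Ioc k n, aK α t i k = qK α t i k - qK α t (i - 1) k := fun i hi => by
    rw [aK, if_neg (mem_Ioc.1 hi).1.ne]
  rw [sum_congr rfl hcol, sum_Ioc_sub_pred (qK α t · k) hkn, aK, if_pos rfl]
  abel

theorem sum_Icc_qK {α : ℝ} (hα : 0 < α) (t : ℕ → ℝ) (m : ℕ) :
    ∑ j ∈ Icc 1 m, qK α t m j = (t m - t 0) ^ α / (α * Real.Gamma α) := by
  have h := sum_Ioc_sub_pred (fun j => (t m - t j) ^ α) (Nat.zero_le m)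
  simp only [sub_self, Real.zero_rpow hα.ne', zero_sub] at h
  rw [← Icc_add_one_left_eq_Ioc, zero_add] at h
  simp only [qK_eq hα, ← sum_div]
  rw [← neg_eq_iff_eq_neg.2 h, ← sum_neg_distrib]
  simp only [neg_sub]

theorem sum_Icc_aK_nonneg {α : ℝ} (hα : 0 < α) {t : ℕ → ℝ} {k : ℕ}
    (ht : MonotoneOn t (Set.Iic k)) (hk : 1 ≤ k) : 0 ≤ ∑ j ∈ Icc 1 k, aK α t k j := by
  obtain ⟨m, rfl⟩ : ∃ m, k = m + 1 := ⟨k - 1, by omega⟩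
  have hrow : ∀ j ∈ Icc 1 m, aK α t (m + 1) j = qK α t (m + 1) j - qK α t m j := fun j hj => by
    rw [aK, if_neg (by simp only [mem_Icc] at hj; omega), Nat.add_sub_cancel]
  rw [sum_Icc_succ_top (by omega), sum_congr rfl hrow, sum_sub_distrib, aK, if_pos rfl,
    sub_add_eq_add_sub, ← sum_Icc_succ_top (by omega), sum_Icc_qK hα, sum_Icc_qK hα, ← sub_div]
  have h0m : t 0 ≤ t m := ht (by simp) (by simp) (Nat.zero_le m)
  have hm : t m ≤ t (m + 1) := ht (by simp) (by simp) (Nat.le_succ m)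
  have := Real.rpow_le_rpow (sub_nonneg.2 h0m) (sub_le_sub_right hm (t 0)) hα.le
  exact div_nonneg (sub_nonneg.2 this) (mul_pos hα (Real.Gamma_pos_of_pos hα)).le

theorem stmt3_general (α : ℝ) (hα0 : 0 < α) (hα1 : α < 1)
    (N : ℕ) (t : ℕ → ℝ) (ht : ∀ k, k < N → t k < t (k + 1)) :
    ∀ n, 1 ≤ n → n ≤ N → ∀ w : ℕ → ℝ,
      (∑ k ∈ Finset.Icc 1 n, (qK α t n k + ∑ j ∈ Finset.Icc 1 k, aK α t k j) * w k ^ 2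
        ≤ 2 * ∑ k ∈ Finset.Icc 1 n, w k * ∑ j ∈ Finset.Icc 1 k, aK α t k j * w j) ∧
      ((∃ k ∈ Finset.Icc 1 n, w k ≠ 0) →
        0 < ∑ k ∈ Finset.Icc 1 n, (qK α t n k + ∑ j ∈ Finset.Icc 1 k, aK α t k j) * w k ^ 2) := by
  intro n hn hnN w
  have hmono : MonotoneOn t (Set.Iic N) := (strictMonoOn_Iic_of_lt_succ ht).monotoneOn
  have hmono_le : ∀ k ≤ N, MonotoneOn t (Set.Iic k) := fun k hk =>
    hmono.mono (Set.Iic_subset_Iic.2 hk)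
  constructor
  · have hcoeff : ∀ k ∈ Icc 1 n, qK α t n k = aK α t k k + ∑ i ∈ Ioc k n, aK α t i k :=
      fun k hk => (aK_add_sum_Ioc_aK α t (mem_Icc.1 hk).2).symm
    rw [sum_congr rfl fun k hk => by rw [hcoeff k hk]]
    refine sum_diag_add_col_add_row_mul_sq_le (fun k hk j hj => ?_) w
    exact aK_nonpos hα0 hα1 (hmono_le k (by simp only [mem_Icc] at hk; omega)) (mem_Ico.1 hj).2
  · refine sum_mul_sq_pos fun k hk => ?_
    obtain ⟨hk1, hkn⟩ := mem_Icc.1 hk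
    have hstep : t (k - 1) < t k := by simpa [Nat.sub_add_cancel hk1] using ht (k - 1) (by omega)
    exact add_pos_of_pos_of_nonneg (qK_pos hα0 hstep (hmono (by simp; omega) (by simpa) hkn))
      (sum_Icc_aK_nonneg hα0 (hmono_le k (by omega)) hk1)

theorem stmt3 (α : ℝ) (hα0 : 0 < α) (hα1 : α < 1)
    (N : ℕ) (t : ℕ → ℝ) (ht0 : t 0 = 0) (ht : ∀ k, k < N → t k < t (k + 1)) :
    ∀ n, 1 ≤ n → n ≤ N → ∀ w : ℕ → ℝ,
      (∑ k ∈ Finset.Icc 1 n, (qK α t n k + ∑ j ∈ Finset.Icc 1 k, aK α t k j) * w k ^ 2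
        ≤ 2 * ∑ k ∈ Finset.Icc 1 n, w k * ∑ j ∈ Finset.Icc 1 k, aK α t k j * w j) ∧
      ((∃ k ∈ Finset.Icc 1 n, w k ≠ 0) →
        0 < ∑ k ∈ Finset.Icc 1 n, (qK α t n k + ∑ j ∈ Finset.Icc 1 k, aK α t k j) * w k ^ 2) :=
  stmt3_general α hα0 hα1 N t ht
end

section
/- For each n with 2 ≤ n ≤ N, the DOC kernels satisfy the exact identity θ_0^{(n)} − θ_1^{(n)} = q_1^{(n)} / ( q_0^{(n)} q_0^{(n−1)} ) = ( ω_{1+α}(τ_n + τ_{n−1}) − ω_{1+α}(τ_n) ) / ( ω_{1+α}(τ_n) · ω_{1+α}(τ_{n−1}) ). -/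
open Finset intervalIntegral Matrix

/-!
Only the first two DOC kernels enter: `θ₀⁽ⁿ⁾ = 1/q₀⁽ⁿ⁾`, and one step of the recursion gives
`θ₁⁽ⁿ⁾ = -θ₀⁽ⁿ⁾ a₁⁽ⁿ⁾ / q₀⁽ⁿ⁻¹⁾` with `a₁⁽ⁿ⁾ = q₁⁽ⁿ⁾ - q₀⁽ⁿ⁻¹⁾`, so the difference collapses to
`q₁⁽ⁿ⁾ / (q₀⁽ⁿ⁾ q₀⁽ⁿ⁻¹⁾)`. Since `ω_{1+α}` is an antiderivative of `ω_α`, each `q` is a difference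
of values of `ω_{1+α}`, which gives the second form.
-/

theorem omegaK_one_add {α : ℝ} (hα : α ≠ 0) (s : ℝ) :
    omegaK (1 + α) s = s ^ α / (α * Real.Gamma α) := by
  rw [omegaK, add_comm, Real.Gamma_add_one hα, add_sub_cancel_right]

theorem omegaK_one_add_pos {α s : ℝ} (hα : 0 < α) (hs : 0 < s) : 0 < omegaK (1 + α) s := by
  rw [omegaK_one_add hα.ne']
  exact div_pos (Real.rpow_pos_of_pos hs α) (mul_pos hα (Real.Gamma_pos_of_pos hα))

theorem qK_eq_omegaK_sub {α : ℝ} (hα : 0 < α) (t : ℕ → ℝ) (n k : ℕ) :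
    qK α t n k = omegaK (1 + α) (t n - t (k - 1)) - omegaK (1 + α) (t n - t k) := by
  rw [qK, omegaK_one_add hα.ne', omegaK_one_add hα.ne', ← sub_div]
  simp only [omegaK]
  rw [intervalIntegral.integral_div,
    intervalIntegral.integral_comp_sub_left (fun s => s ^ (α - 1)) (t n),
    integral_rpow (Or.inl (by linarith)), sub_add_cancel, div_div]

theorem qK_self {α : ℝ} (hα : 0 < α) (t : ℕ → ℝ) (n : ℕ) :
    qK α t n n = omegaK (1 + α) (t n - t (n - 1)) := by
  rw [qK_eq_omegaK_sub hα, sub_self, omegaK_one_add hα.ne', omegaK_one_add hα.ne',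
    Real.zero_rpow hα.ne', zero_div, sub_zero]

theorem thetaAux_zero_zero (A : ℕ → ℕ → ℝ) (n : ℕ) : thetaAux A n 0 0 = 1 / A n n := by
  simp [thetaAux]

theorem thetaAux_one_one (A : ℕ → ℕ → ℝ) (n : ℕ) :
    thetaAux A n 1 1 = -(1 / A (n - 1) (n - 1)) * (1 / A n n * A n (n - 1)) := by
  simp [thetaAux]

theorem thetaK_self (α : ℝ) (t : ℕ → ℝ) (n : ℕ) : thetaK α t n n = 1 / qK α t n n := by
  rw [thetaK, Nat.sub_self, thetaAux_zero_zero, aK, if_pos rfl]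

theorem thetaK_self_sub_one (α : ℝ) (t : ℕ → ℝ) {n : ℕ} (hn : 1 ≤ n) :
    thetaK α t n (n - 1) = -(1 / qK α t (n - 1) (n - 1)) *
      (1 / qK α t n n * (qK α t n (n - 1) - qK α t (n - 1) (n - 1))) := by
  rw [thetaK, Nat.sub_sub_self hn, thetaAux_one_one, aK, aK, aK, if_pos rfl, if_pos rfl,
    if_neg (by omega)]

theorem thetaK_self_sub_thetaK_self_sub_one (α : ℝ) (t : ℕ → ℝ) {n : ℕ} (hn : 1 ≤ n)
    (hq : qK α t (n - 1) (n - 1) ≠ 0) :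
    thetaK α t n n - thetaK α t n (n - 1)
      = qK α t n (n - 1) / (qK α t n n * qK α t (n - 1) (n - 1)) := by
  rw [thetaK_self, thetaK_self_sub_one α t hn]
  field_simp
  ring

theorem stmt7_general (α : ℝ) (hα0 : 0 < α)
    (N : ℕ) (t : ℕ → ℝ) (ht : ∀ k, k < N → t k < t (k + 1)) :
    ∀ n, 2 ≤ n → n ≤ N →
      thetaK α t n n - thetaK α t n (n - 1)
          = qK α t n (n - 1) / (qK α t n n * qK α t (n - 1) (n - 1)) ∧
      thetaK α t n n - thetaK α t n (n - 1)
          = (omegaK (1 + α) ((t n - t (n - 1)) + (t (n - 1) - t (n - 2)))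
              - omegaK (1 + α) (t n - t (n - 1)))
            / (omegaK (1 + α) (t n - t (n - 1)) * omegaK (1 + α) (t (n - 1) - t (n - 2))) := by
  intro n hn2 hnN
  have hstep : t (n - 2) < t (n - 1) := by
    simpa [show n - 2 + 1 = n - 1 by omega] using ht (n - 2) (by omega)
  have hq : qK α t (n - 1) (n - 1) = omegaK (1 + α) (t (n - 1) - t (n - 2)) := by
    rw [qK_self hα0, show n - 1 - 1 = n - 2 by omega]
  have hdiff := thetaK_self_sub_thetaK_self_sub_one α t (by omega : 1 ≤ n)
    (hq ▸ (omegaK_one_add_pos hα0 (sub_pos.2 hstep)).ne')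
  refine ⟨hdiff, ?_⟩
  rw [hdiff, qK_eq_omegaK_sub hα0, qK_self hα0, hq, show n - 1 - 1 = n - 2 by omega]
  rw [sub_add_sub_cancel]

theorem stmt7 (α : ℝ) (hα0 : 0 < α) (hα1 : α < 1)
    (N : ℕ) (t : ℕ → ℝ) (ht0 : t 0 = 0) (ht : ∀ k, k < N → t k < t (k + 1)) :
    ∀ n, 2 ≤ n → n ≤ N →
      thetaK α t n n - thetaK α t n (n - 1)
          = qK α t n (n - 1) / (qK α t n n * qK α t (n - 1) (n - 1)) ∧
      thetaK α t n n - thetaK α t n (n - 1)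
          = (omegaK (1 + α) ((t n - t (n - 1)) + (t (n - 1) - t (n - 2)))
              - omegaK (1 + α) (t n - t (n - 1)))
            / (omegaK (1 + α) (t n - t (n - 1)) * omegaK (1 + α) (t (n - 1) - t (n - 2))) :=
  stmt7_general α hα0 N t ht
end

section
/- The kernels q_{j}^{(n)} satisfy: q_j^{(n)} > 0 for 0 ≤ j ≤ n−1; q_{j−1}^{(n−1)} > q_j^{(n)} for 1 ≤ j ≤ n−1 and n ≥ 2; and the strict log-convexity-type inequality q_{j−1}^{(n−1)} q_{j+1}^{(n)} > q_j^{(n−1)} q_j^{(n)} for 1 ≤ j ≤ n−2 and n ≥ 3. -/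
/-!
Positivity and the decrease in `n` hold because `ω_α` is positive and strictly decreasing on
`(0, ∞)`. For the log-convexity inequality, the ratio
`ω_α(t_n - s) / ω_α(t_{n-1} - s) = ((t_n - s) / (t_{n-1} - s)) ^ (α - 1)` strictly decreases in `s`;
bounding it on `(t_{n-j-2}, t_{n-j-1})` from below and on `(t_{n-j-1}, t_{n-j})` from above by its
value at the common endpoint `t_{n-j-1}` gives the inequality, a Chebyshev-type comparison.
-/

open Finset intervalIntegral Matrix

open MeasureTheory Set

theorem integral_lt_integral_of_lt_on_Ioo {f g : ℝ → ℝ} {a b : ℝ} (hab : a < b)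
    (hf : IntervalIntegrable f volume a b) (hg : IntervalIntegrable g volume a b)
    (hfg : ∀ x ∈ Ioo a b, f x < g x) :
    ∫ x in a..b, f x < ∫ x in a..b, g x := by
  have h : 0 < ∫ x in a..b, (g x - f x) :=
    intervalIntegral_pos_of_pos_on (hg.sub hf) (fun x hx => sub_pos.mpr (hfg x hx)) hab
  rwa [integral_sub hg hf, sub_pos] at h

theorem integral_mul_integral_lt_of_strictAntiOn_div {f g : ℝ → ℝ} {a b c : ℝ}
    (hab : a < b) (hbc : b < c)
    (hf : IntervalIntegrable f volume a c) (hg : IntervalIntegrable g volume a c)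
    (hf_pos : ∀ x ∈ Ioo a c, 0 < f x) (hgf : StrictAntiOn (fun x => g x / f x) (Ioo a c)) :
    (∫ x in a..b, f x) * (∫ x in b..c, g x) < (∫ x in b..c, f x) * ∫ x in a..b, g x := by
  have hb : b ∈ Ioo a c := ⟨hab, hbc⟩
  have hsub₁ : uIcc a b ⊆ uIcc a c := uIcc_subset_uIcc_left (Icc_subset_uIcc ⟨hab.le, hbc.le⟩)
  have hsub₂ : uIcc b c ⊆ uIcc a c := uIcc_subset_uIcc_right (Icc_subset_uIcc ⟨hab.le, hbc.le⟩)
  set r := g b / f b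
  have hf₁ : 0 < ∫ x in a..b, f x := intervalIntegral_pos_of_pos_on (hf.mono_set hsub₁)
    (fun x hx => hf_pos x ⟨hx.1, hx.2.trans hbc⟩) hab
  have hf₂ : 0 < ∫ x in b..c, f x := intervalIntegral_pos_of_pos_on (hf.mono_set hsub₂)
    (fun x hx => hf_pos x ⟨hab.trans hx.1, hx.2⟩) hbc
  have hleft : r * ∫ x in a..b, f x < ∫ x in a..b, g x := by
    rw [← intervalIntegral.integral_const_mul]
    refine integral_lt_integral_of_lt_on_Ioo hab ((hf.mono_set hsub₁).const_mul r)
      (hg.mono_set hsub₁) fun x hx => ?_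
    have hxc : x ∈ Ioo a c := ⟨hx.1, hx.2.trans hbc⟩
    have := hgf hxc hb hx.2
    rwa [lt_div_iff₀ (hf_pos x hxc)] at this
  have hright : ∫ x in b..c, g x < r * ∫ x in b..c, f x := by
    rw [← intervalIntegral.integral_const_mul]
    refine integral_lt_integral_of_lt_on_Ioo hbc (hg.mono_set hsub₂)
      ((hf.mono_set hsub₂).const_mul r) fun x hx => ?_
    have hxc : x ∈ Ioo a c := ⟨hab.trans hx.1, hx.2⟩
    have := hgf hb hxc hx.1
    rwa [div_lt_iff₀ (hf_pos x hxc)] at this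
  calc (∫ x in a..b, f x) * (∫ x in b..c, g x)
      < (∫ x in a..b, f x) * (r * ∫ x in b..c, f x) := mul_lt_mul_of_pos_left hright hf₁
    _ = (∫ x in b..c, f x) * (r * ∫ x in a..b, f x) := by ring
    _ < (∫ x in b..c, f x) * ∫ x in a..b, g x := mul_lt_mul_of_pos_left hleft hf₂

section Kernel

variable {α : ℝ}

theorem omegaK_pos (hα : 0 < α) {s : ℝ} (hs : 0 < s) : 0 < omegaK α s :=
  div_pos (Real.rpow_pos_of_pos hs _) (Real.Gamma_pos_of_pos hα)

theorem omegaK_strictAntiOn (hα0 : 0 < α) (hα1 : α < 1) : StrictAntiOn (omegaK α) (Ioi 0) :=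
  fun _ hx _ hy hxy => div_lt_div_of_pos_right
    (Real.strictAntiOn_rpow_Ioi_of_exponent_neg (by linarith) hx hy hxy)
    (Real.Gamma_pos_of_pos hα0)

theorem intervalIntegrable_omegaK_sub (hα : 0 < α) (c a b : ℝ) :
    IntervalIntegrable (fun s => omegaK α (c - s)) volume a b := by
  have h := (intervalIntegrable_rpow' (r := α - 1) (by linarith) (a := c - a) (b := c - b))
    |>.comp_sub_left c
  simp only [sub_sub_cancel] at h
  exact h.div_const _

theorem integral_omegaK_sub_pos (hα : 0 < α) {a b c : ℝ} (hab : a < b) (hbc : b ≤ c) :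
    0 < ∫ s in a..b, omegaK α (c - s) :=
  intervalIntegral_pos_of_pos_on (intervalIntegrable_omegaK_sub hα c a b)
    (fun _ hx => omegaK_pos hα (by linarith [hx.2])) hab

theorem strictAntiOn_omegaK_sub_div_omegaK_sub (hα0 : 0 < α) (hα1 : α < 1) {T' T : ℝ}
    (hT : T' < T) :
    StrictAntiOn (fun s => omegaK α (T - s) / omegaK α (T' - s)) (Iio T') := by
  intro x hx y hy hxy
  have hx' : 0 < T' - x := sub_pos.mpr hx
  have hy' : 0 < T' - y := sub_pos.mpr hy
  have hratio (s : ℝ) (hs : 0 < T' - s) :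
      omegaK α (T - s) / omegaK α (T' - s) = ((T - s) / (T' - s)) ^ (α - 1) := by
    rw [Real.div_rpow (by linarith) hs.le, omegaK, omegaK,
      div_div_div_cancel_right₀ (Real.Gamma_pos_of_pos hα0).ne']
  simp only [hratio x hx', hratio y hy']
  refine Real.rpow_lt_rpow_of_neg (div_pos (by linarith) hx') ?_ (by linarith)
  rw [div_lt_div_iff₀ hx' hy']
  nlinarith

end Kernel

theorem stmt9_general (α : ℝ) (hα0 : 0 < α) (hα1 : α < 1)
    (N : ℕ) (t : ℕ → ℝ) (ht : ∀ k, k < N → t k < t (k + 1)) :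
    (∀ n j, 1 ≤ n → n ≤ N → j ≤ n - 1 → 0 < qK α t n (n - j)) ∧
    (∀ n j, 2 ≤ n → n ≤ N → 1 ≤ j → j ≤ n - 1 →
      qK α t n (n - j) < qK α t (n - 1) (n - j)) ∧
    (∀ n j, 3 ≤ n → n ≤ N → 1 ≤ j → j ≤ n - 2 →
      qK α t (n - 1) (n - 1 - j) * qK α t n (n - j)
        < qK α t (n - 1) (n - j) * qK α t n (n - j - 1)) := by
  have hmono : StrictMonoOn t (Set.Iic N) := strictMonoOn_Iic_of_lt_succ ht
  have hlt {i k : ℕ} (hik : i < k) (hk : k ≤ N) : t i < t k :=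
    hmono (Set.mem_Iic.mpr (by omega)) (Set.mem_Iic.mpr hk) hik
  have hle {i k : ℕ} (hik : i ≤ k) (hk : k ≤ N) : t i ≤ t k :=
    hmono.monotoneOn (Set.mem_Iic.mpr (by omega)) (Set.mem_Iic.mpr hk) hik
  refine ⟨fun n j _ hn _ => ?_, fun n j _ hn _ _ => ?_, fun n j _ hn _ _ => ?_⟩
  · exact integral_omegaK_sub_pos hα0 (hlt (by omega) (by omega)) (hle (by omega) hn)
  · have hc : t (n - j) ≤ t (n - 1) := hle (by omega) (by omega)
    have hT : t (n - 1) < t n := hlt (by omega) hn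
    exact integral_lt_integral_of_lt_on_Ioo (hlt (by omega) (by omega))
      (intervalIntegrable_omegaK_sub hα0 _ _ _) (intervalIntegrable_omegaK_sub hα0 _ _ _)
      fun x hx => omegaK_strictAntiOn hα0 hα1 (show 0 < t (n - 1) - x by linarith [hx.2])
        (show 0 < t n - x by linarith [hx.2]) (by linarith)
  · rw [show n - 1 - j = n - j - 1 by omega]
    have hc : t (n - j) ≤ t (n - 1) := hle (by omega) (by omega)
    exact integral_mul_integral_lt_of_strictAntiOn_div (hlt (by omega) (by omega))
      (hlt (by omega) (by omega)) (intervalIntegrable_omegaK_sub hα0 _ _ _)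
      (intervalIntegrable_omegaK_sub hα0 _ _ _)
      (fun x hx => omegaK_pos hα0 (by linarith [hx.2]))
      ((strictAntiOn_omegaK_sub_div_omegaK_sub hα0 hα1 (hlt (by omega) hn)).mono
        fun x hx => mem_Iio.mpr (hx.2.trans_le hc))

theorem stmt9 (α : ℝ) (hα0 : 0 < α) (hα1 : α < 1)
    (N : ℕ) (t : ℕ → ℝ) (ht0 : t 0 = 0) (ht : ∀ k, k < N → t k < t (k + 1)) :
    (∀ n j, 1 ≤ n → n ≤ N → j ≤ n - 1 → 0 < qK α t n (n - j)) ∧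
    (∀ n j, 2 ≤ n → n ≤ N → 1 ≤ j → j ≤ n - 1 →
      qK α t n (n - j) < qK α t (n - 1) (n - j)) ∧
    (∀ n j, 3 ≤ n → n ≤ N → 1 ≤ j → j ≤ n - 2 →
      qK α t (n - 1) (n - 1 - j) * qK α t n (n - j)
        < qK α t (n - 1) (n - j) * qK α t n (n - j - 1)) :=
  stmt9_general α hα0 hα1 N t ht
end

section
/- Define the auxiliary kernels ζ_0^{(n)} := θ_0^{(n)} and ζ_{n−j}^{(n)} := θ_{n−j}^{(n)} − θ_{n−j−1}^{(n)} for 1 ≤ j ≤ n−1. Then the kernels ζ are orthogonal to the kernels q, that is, ∑_{j=k}^{n} ζ_{n−j}^{(n)} q_{j−k}^{(j)} = δ_{nk} for all 1 ≤ k ≤ n ≤ N, where δ_{nk} is the Kronecker delta. -/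
open Finset intervalIntegral Matrix

/-!
The kernels `a` are the backward differences `q_{j-k}^{(j)} - q_{j-k-1}^{(j-1)}` in the upper
index, and the kernels `ζ` are the forward differences of `θ`. Summation by parts therefore turns
`∑ ζ q` into `∑ θ a`, which is `δ_{nk}` by the recursive definition of the DOC kernels `θ`;
the only analytic input is `q_0^{(k)} > 0`, so that the recursion never divides by zero.
-/

theorem Finset.sum_Ico_sub_succ_mul_add_eq {R : Type*} [CommRing R] (F G : ℕ → R) {k n : ℕ}
    (hkn : k ≤ n) :
    ∑ j ∈ Ico k n, (F j - F (j + 1)) * G j + F n * G n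
      = F k * G k + ∑ j ∈ Ioc k n, F j * (G j - G (j - 1)) := by
  induction n, hkn using Nat.le_induction with
  | base => simp
  | succ n hkn ih =>
    rw [sum_Ico_succ_top hkn, sum_Ioc_succ_top hkn, ← add_assoc, ← ih, Nat.add_sub_cancel]
    ring

section DOCKernels

variable (A : ℕ → ℕ → ℝ) (n : ℕ)

theorem thetaAux_of_le {m M : ℕ} (h : m ≤ M) : thetaAux A n M m = thetaAux A n m m := by
  induction M with
  | zero => obtain rfl : m = 0 := Nat.le_zero.mp h; rfl
  | succ M ih =>
    rcases h.lt_or_eq with h | rfl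
    · rw [← ih (by omega)]
      exact if_pos (by omega)
    · rfl

theorem sum_range_thetaAux_mul (d : ℕ) (hd : A (n - d) (n - d) ≠ 0) :
    ∑ i ∈ range (d + 1), thetaAux A n i i * A (n - i) (n - d) = if d = 0 then 1 else 0 := by
  cases d with
  | zero =>
    simp only [zero_add, sum_range_one, Nat.sub_zero, if_true] at hd ⊢
    simp [thetaAux, hd]
  | succ d =>
    have hlast : thetaAux A n (d + 1) (d + 1) = -(1 / A (n - (d + 1)) (n - (d + 1))) *
        ∑ i ∈ range (d + 1), thetaAux A n i i * A (n - i) (n - (d + 1)) := by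
      rw [thetaAux, if_neg (by omega)]
      congr 1
      exact sum_congr rfl fun i hi => by rw [thetaAux_of_le A n (mem_range_succ_iff.mp hi)]
    rw [sum_range_succ, hlast, if_neg d.succ_ne_zero]
    field_simp
    ring

theorem sum_Icc_thetaAux_mul {k : ℕ} (hkn : k ≤ n) (hk : A k k ≠ 0) :
    ∑ j ∈ Icc k n, thetaAux A n (n - j) (n - j) * A j k = if n = k then 1 else 0 := by
  have hreflect : ∑ j ∈ Icc k n, thetaAux A n (n - j) (n - j) * A j k
      = ∑ i ∈ range (n - k + 1), thetaAux A n i i * A (n - i) (n - (n - k)) :=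
    sum_nbij' (n - ·) (n - ·)
      (fun j hj => by simp only [mem_Icc, mem_range] at hj ⊢; omega)
      (fun i hi => by simp only [mem_Icc, mem_range] at hi ⊢; omega)
      (fun j hj => Nat.sub_sub_self (mem_Icc.mp hj).2)
      (fun i hi => Nat.sub_sub_self (by have := mem_range.mp hi; omega))
      (fun j hj => by rw [Nat.sub_sub_self (mem_Icc.mp hj).2, Nat.sub_sub_self hkn])
  rw [hreflect, sum_range_thetaAux_mul A n _ (by rwa [Nat.sub_sub_self hkn])]
  exact if_congr (by omega) rfl rfl

end DOCKernels

section L1Kernels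

variable {α : ℝ} {t : ℕ → ℝ}

theorem qK_self_pos (hα : 0 < α) {k : ℕ} (hk : t (k - 1) < t k) : 0 < qK α t k k := by
  have hint : qK α t k k = (t k - t (k - 1)) ^ α / α / Real.Gamma α := by
    rw [qK, integral_comp_sub_left (fun u => omegaK α u) (t k)]
    simp only [omegaK, intervalIntegral.integral_div, sub_self]
    rw [integral_rpow (Or.inl (by linarith)), sub_add_cancel, Real.zero_rpow hα.ne', sub_zero]
  have : 0 < t k - t (k - 1) := sub_pos.mpr hk
  rw [hint]
  positivity

theorem sum_Icc_zetaK_mul {n k : ℕ} (hkn : k ≤ n) (G : ℕ → ℝ) :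
    ∑ j ∈ Icc k n, zetaK α t n j * G j
      = ∑ j ∈ Ico k n, (thetaK α t n j - thetaK α t n (j + 1)) * G j
        + thetaK α t n n * G n := by
  rw [← sum_Ico_add_eq_sum_Icc hkn, zetaK, if_pos rfl]
  congr 1
  exact sum_congr rfl fun j hj => by rw [zetaK, if_neg (mem_Ico.mp hj).2.ne]

theorem sum_Icc_thetaK_mul_aK {n k : ℕ} (hkn : k ≤ n) :
    ∑ j ∈ Icc k n, thetaK α t n j * aK α t j k
      = thetaK α t n k * qK α t k k
        + ∑ j ∈ Ioc k n, thetaK α t n j * (qK α t j k - qK α t (j - 1) k) := by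
  rw [← add_sum_Ioc_eq_sum_Icc hkn, aK, if_pos rfl]
  congr 1
  exact sum_congr rfl fun j hj => by rw [aK, if_neg (mem_Ioc.mp hj).1.ne]

end L1Kernels

theorem stmt10_general (α : ℝ) (hα0 : 0 < α)
    (N : ℕ) (t : ℕ → ℝ) (ht : ∀ k, k < N → t k < t (k + 1)) :
    ∀ n k, 1 ≤ k → k ≤ n → n ≤ N →
      ∑ j ∈ Finset.Icc k n, zetaK α t n j * qK α t j k = if n = k then 1 else 0 := by
  intro n k hk hkn hnN
  have hstep : t (k - 1) < t k := by
    simpa [Nat.sub_add_cancel hk] using ht (k - 1) (by omega)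
  have hak : aK α t k k ≠ 0 := by
    rw [aK, if_pos rfl]
    exact (qK_self_pos hα0 hstep).ne'
  rw [sum_Icc_zetaK_mul hkn, Finset.sum_Ico_sub_succ_mul_add_eq _ _ hkn,
    ← sum_Icc_thetaK_mul_aK hkn]
  exact sum_Icc_thetaAux_mul (aK α t) n hkn hak

theorem stmt10 (α : ℝ) (hα0 : 0 < α) (hα1 : α < 1)
    (N : ℕ) (t : ℕ → ℝ) (ht0 : t 0 = 0) (ht : ∀ k, k < N → t k < t (k + 1)) :
    ∀ n k, 1 ≤ k → k ≤ n → n ≤ N →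
      ∑ j ∈ Finset.Icc k n, zetaK α t n j * qK α t j k = if n = k then 1 else 0 :=
  stmt10_general α hα0 N t ht
end

section
/- (Theorem 3.1: unique solvability) Let M ∈ ℕ, ε > 0, and let D ∈ ℝ^{M×M} be symmetric and negative semi-definite. Fix 1 ≤ n ≤ N and suppose the maximum step size satisfies τ := max_k τ_k < (2 Γ(1+α))^{1/α}, so that θ_0^{(n)} = Γ(1+α) τ_n^{−α} > 1/2. Then for any given u^0, …, u^{n−1} ∈ ℝ^M there exists a unique u^n ∈ ℝ^M satisfying, componentwise for every index i, ∑_{j=1}^{n} θ_{n−j}^{(n)} ( u_i^j − u_i^{j−1} ) = ε² ( D·(u^n + u^{n−1})/2 )_i − H( u_i^n, u_i^{n−1} ). -/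
/-!
Since `q₀⁽ⁿ⁾ = τₙ^α / Γ(1+α)`, the leading DOC kernel is `θ₀⁽ⁿ⁾ = Γ(1+α) τₙ^(-α)`, and the step-size
restriction is exactly `θ₀⁽ⁿ⁾ > 1/2`. Because `H(·, b) + ·/2` is monotone, the step equation reads
`gᵢ(uᵢ) = (ε²/2 · D u)ᵢ` with each `gᵢ` strongly monotone of modulus `θ₀⁽ⁿ⁾ - 1/2 > 0`.
Uniqueness then follows from `D ≤ 0`. For existence, symmetry of `D` makes the system the
Euler–Lagrange equation of `∑ᵢ ∫₀^{uᵢ} gᵢ - (ε²/4) uᵀ D u`, which is coercive and has a minimiser.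
-/

open Finset intervalIntegral Matrix

open Filter

lemma integral_omegaK_sub {α : ℝ} (hα : 0 < α) (a b : ℝ) :
    ∫ s in a..b, omegaK α (b - s) = (b - a) ^ α / Real.Gamma (1 + α) := by
  have hΓ : Real.Gamma (1 + α) = α * Real.Gamma α := by
    rw [add_comm]; exact Real.Gamma_add_one hα.ne'
  simp only [omegaK, intervalIntegral.integral_div]
  rw [intervalIntegral.integral_comp_sub_left (fun s => s ^ (α - 1)) b, sub_self,
    integral_rpow (Or.inl (by linarith)), sub_add_cancel, Real.zero_rpow hα.ne', hΓ]
  field_simp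
  ring

lemma thetaK_self_eq {α : ℝ} (hα : 0 < α) {t : ℕ → ℝ} {n : ℕ} (ht : t (n - 1) ≤ t n) :
    thetaK α t n n = Real.Gamma (1 + α) * (t n - t (n - 1)) ^ (-α) := by
  have hθ : thetaK α t n n = 1 / qK α t n n := by simp [thetaK, thetaAux, aK]
  rw [hθ, qK, integral_omegaK_sub hα, Real.rpow_neg (sub_nonneg.2 ht), one_div_div,
    div_eq_mul_inv]

lemma one_half_lt_mul_rpow_neg {α c τ : ℝ} (hα : 0 < α) (hc : 0 < c) (hτ : 0 < τ)
    (h : τ < (2 * c) ^ (1 / α)) : 1 / 2 < c * τ ^ (-α) := by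
  rw [one_div α, Real.lt_rpow_inv_iff_of_pos hτ.le (by positivity) hα] at h
  rw [Real.rpow_neg hτ.le, ← div_eq_mul_inv, lt_div_iff₀ (by positivity)]
  linarith

def IsStronglyMonotone (κ : ℝ) (g : ℝ → ℝ) : Prop :=
  ∀ x y, κ * (x - y) ^ 2 ≤ (g x - g y) * (x - y)

lemma IsStronglyMonotone.le_integral {κ : ℝ} {g : ℝ → ℝ} (hg : IsStronglyMonotone κ g)
    (hcont : Continuous g) (x : ℝ) : g 0 * x + κ / 2 * x ^ 2 ≤ ∫ s in (0)..x, g s := by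
  set ψ : ℝ → ℝ := fun y => (∫ s in (0)..y, g s) - g 0 * y - κ / 2 * y ^ 2
  have hψ : ∀ y, HasDerivAt ψ (g y - g 0 - κ * y) y := fun y => by
    refine (((hcont.integral_hasStrictDerivAt 0 y).hasDerivAt.fun_sub
      ((hasDerivAt_id' y).const_mul (g 0))).fun_sub
        ((hasDerivAt_pow 2 y).const_mul (κ / 2))).congr_deriv ?_
    push_cast
    ring
  -- `ψ'` has the sign of its argument, so `ψ` is minimal at `0`
  have hsign : ∀ y, 0 ≤ (g y - g 0 - κ * y) * y := fun y => by
    have := hg y 0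
    simp only [sub_zero] at this
    nlinarith
  have hcontψ : Continuous ψ := continuous_iff_continuousAt.2 fun y => (hψ y).continuousAt
  have hdiffψ : Differentiable ℝ ψ := fun y => (hψ y).differentiableAt
  suffices ψ 0 ≤ ψ x by simp [ψ] at this; linarith
  rcases le_total 0 x with hx | hx
  · refine monotoneOn_of_deriv_nonneg (convex_Ici 0) hcontψ.continuousOn
      hdiffψ.differentiableOn (fun y hy => ?_) Set.self_mem_Ici hx hx
    rw [interior_Ici] at hy
    rw [(hψ y).deriv]
    exact nonneg_of_mul_nonneg_left (hsign y) hy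
  · refine antitoneOn_of_deriv_nonpos (convex_Iic 0) hcontψ.continuousOn
      hdiffψ.differentiableOn (fun y hy => ?_) hx Set.self_mem_Iic hx
    rw [interior_Iic] at hy
    rw [(hψ y).deriv]
    nlinarith [hsign y, Set.mem_Iio.1 hy]

lemma sq_norm_le_sum_sq {ι : Type*} [Fintype ι] (v : ι → ℝ) : ‖v‖ ^ 2 ≤ ∑ i, v i ^ 2 := by
  have hsum : 0 ≤ ∑ i, v i ^ 2 := Finset.sum_nonneg fun i _ => sq_nonneg (v i)
  have hle : ‖v‖ ≤ √(∑ i, v i ^ 2) := (pi_norm_le_iff_of_nonneg (Real.sqrt_nonneg _)).2 fun i =>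
    Real.abs_le_sqrt (Finset.single_le_sum (fun j _ => sq_nonneg (v j)) (Finset.mem_univ i))
  calc ‖v‖ ^ 2 ≤ √(∑ i, v i ^ 2) ^ 2 := pow_le_pow_left₀ (norm_nonneg v) hle 2
    _ = ∑ i, v i ^ 2 := Real.sq_sqrt hsum

section DiagonalMinusMatrix

variable {M : ℕ} {κ : ℝ} {g : Fin M → ℝ → ℝ} {A : Matrix (Fin M) (Fin M) ℝ}

noncomputable def diagPotential (g : Fin M → ℝ → ℝ) (A : Matrix (Fin M) (Fin M) ℝ)
    (v : Fin M → ℝ) : ℝ :=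
  (∑ i, ∫ s in (0)..v i, g i s) - v ⬝ᵥ A *ᵥ v / 2

lemma continuous_diagPotential (hcont : ∀ i, Continuous (g i)) :
    Continuous (diagPotential g A) := by
  unfold diagPotential
  have hint : ∀ i, Continuous fun v : Fin M → ℝ => ∫ s in (0)..v i, g i s := fun i =>
    (differentiable_integral_of_continuous (hcont i)).continuous.comp (continuous_apply i)
  fun_prop

lemma tendsto_diagPotential_cocompact (hκ : 0 < κ) (hg : ∀ i, IsStronglyMonotone κ (g i))
    (hcont : ∀ i, Continuous (g i)) (hA : ∀ w, w ⬝ᵥ A *ᵥ w ≤ 0) :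
    Tendsto (diagPotential g A) (cocompact _) atTop := by
  set K := ∑ i, g i 0 ^ 2 / κ
  have hlow : ∀ v, κ / 4 * ‖v‖ ^ 2 - K ≤ diagPotential g A v := fun v => by
    have hterm : ∀ i, κ / 4 * v i ^ 2 - g i 0 ^ 2 / κ ≤ ∫ s in (0)..v i, g i s := fun i => by
      have hsq : g i 0 ^ 2 / κ * κ = g i 0 ^ 2 := div_mul_cancel₀ _ hκ.ne'
      nlinarith [(hg i).le_integral (hcont i) (v i), sq_nonneg (κ * v i / 2 + g i 0)]
    have hsum := Finset.sum_le_sum fun i (_ : i ∈ univ) => hterm i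
    rw [Finset.sum_sub_distrib, ← Finset.mul_sum] at hsum
    have := mul_le_mul_of_nonneg_left (sq_norm_le_sum_sq v) (by positivity : 0 ≤ κ / 4)
    unfold diagPotential
    linarith [hA v]
  have hquad : Tendsto (fun r : ℝ => κ / 4 * r ^ 2 - K) atTop atTop :=
    tendsto_atTop_add_const_right _ _
      ((tendsto_pow_atTop two_ne_zero).const_mul_atTop (by positivity))
  exact tendsto_atTop_mono hlow (hquad.comp tendsto_norm_cocompact_atTop)

lemma hasDerivAt_diagPotential_line (hcont : ∀ i, Continuous (g i)) (hA : A.IsSymm)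
    (x : Fin M → ℝ) (i : Fin M) :
    HasDerivAt (fun s : ℝ => diagPotential g A (x + s • Pi.single i 1))
      (g i (x i) - (A *ᵥ x) i) 0 := by
  set e : Fin M → ℝ := Pi.single i 1
  have hquad : ∀ s : ℝ, (x + s • e) ⬝ᵥ A *ᵥ (x + s • e)
      = x ⬝ᵥ A *ᵥ x + s * (2 * (A *ᵥ x) i) + s ^ 2 * (e ⬝ᵥ A *ᵥ e) := fun s => by
    have hsymm : x ⬝ᵥ A *ᵥ e = e ⬝ᵥ A *ᵥ x := by
      rw [← dotProduct_transpose_mulVec, hA.eq]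
    have hei : e ⬝ᵥ A *ᵥ x = (A *ᵥ x) i := single_one_dotProduct i _
    simp only [mulVec_add, mulVec_smul, dotProduct_add, add_dotProduct, dotProduct_smul,
      smul_dotProduct, smul_eq_mul, hsymm, hei]
    ring
  have hint : HasDerivAt (fun s : ℝ => ∑ j, ∫ r in (0)..x j + s * e j, g j r)
      (∑ j, g j (x j) * e j) 0 := by
    refine HasDerivAt.fun_sum fun j _ => ?_
    have hline : HasDerivAt (fun s : ℝ => x j + s * e j) (e j) 0 := by
      simpa using ((hasDerivAt_id (0 : ℝ)).mul_const (e j)).const_add (x j)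
    have hF : HasDerivAt (fun u => ∫ r in (0)..u, g j r) (g j (x j)) (x j + 0 * e j) := by
      rw [zero_mul, add_zero]
      exact ((hcont j).integral_hasStrictDerivAt 0 (x j)).hasDerivAt
    exact hF.comp 0 hline
  have hpoly : HasDerivAt (fun s : ℝ => (x ⬝ᵥ A *ᵥ x + s * (2 * (A *ᵥ x) i)
      + s ^ 2 * (e ⬝ᵥ A *ᵥ e)) / 2) ((A *ᵥ x) i) 0 := by
    refine (((((hasDerivAt_id' 0).mul_const (2 * (A *ᵥ x) i)).const_add (x ⬝ᵥ A *ᵥ x)).add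
      ((hasDerivAt_pow 2 (0 : ℝ)).mul_const (e ⬝ᵥ A *ᵥ e))).div_const 2).congr_deriv ?_
    simp
  have hsum : ∑ j, g j (x j) * e j = g i (x i) :=
    (dotProduct_single (fun j => g j (x j)) (1 : ℝ) i).trans (mul_one _)
  have hfun : (fun s : ℝ => diagPotential g A (x + s • e)) = fun s =>
      (∑ j, ∫ r in (0)..x j + s * e j, g j r)
        - (x ⬝ᵥ A *ᵥ x + s * (2 * (A *ᵥ x) i) + s ^ 2 * (e ⬝ᵥ A *ᵥ e)) / 2 := by
    funext s
    simp only [diagPotential, hquad, Pi.add_apply, Pi.smul_apply, smul_eq_mul]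
  rw [hfun, ← hsum]
  exact hint.sub hpoly

theorem exists_apply_eq_mulVec (hκ : 0 < κ) (hg : ∀ i, IsStronglyMonotone κ (g i))
    (hcont : ∀ i, Continuous (g i)) (hAsymm : A.IsSymm) (hA : ∀ w, w ⬝ᵥ A *ᵥ w ≤ 0) :
    ∃ v : Fin M → ℝ, ∀ i, g i (v i) = (A *ᵥ v) i := by
  obtain ⟨x, hx⟩ := (continuous_diagPotential hcont).exists_forall_le
    (tendsto_diagPotential_cocompact hκ hg hcont hA)
  refine ⟨x, fun i => ?_⟩
  have hmin : IsLocalMin (fun s : ℝ => diagPotential g A (x + s • Pi.single i 1)) 0 :=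
    Eventually.of_forall fun s => by simpa using hx _
  have := (hasDerivAt_diagPotential_line hcont hAsymm x i).deriv ▸ hmin.deriv_eq_zero
  linarith

theorem injective_apply_sub_mulVec (hκ : 0 < κ) (hg : ∀ i, IsStronglyMonotone κ (g i))
    (hA : ∀ w, w ⬝ᵥ A *ᵥ w ≤ 0) :
    Function.Injective fun (v : Fin M → ℝ) i => g i (v i) - (A *ᵥ v) i := by
  intro v w hvw
  have hcomp : ∀ i, g i (v i) - g i (w i) = (A *ᵥ (v - w)) i := fun i => by
    have := congrFun hvw i
    simp only [mulVec_sub, Pi.sub_apply] at this ⊢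
    linarith
  have hmono : κ * ((v - w) ⬝ᵥ (v - w)) ≤ (v - w) ⬝ᵥ A *ᵥ (v - w) := by
    rw [dotProduct_comm _ (A *ᵥ _), dotProduct, dotProduct, Finset.mul_sum]
    refine Finset.sum_le_sum fun i _ => ?_
    simpa [← hcomp i, sq] using hg i (v i) (w i)
  have hzero : (v - w) ⬝ᵥ (v - w) = 0 := by
    have hnonneg : 0 ≤ (v - w) ⬝ᵥ (v - w) := Finset.sum_nonneg fun i _ => mul_self_nonneg _
    nlinarith [hA (v - w)]
  exact sub_eq_zero.1 (dotProduct_self_eq_zero.1 hzero)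

theorem existsUnique_apply_eq_mulVec (hκ : 0 < κ) (hg : ∀ i, IsStronglyMonotone κ (g i))
    (hcont : ∀ i, Continuous (g i)) (hAsymm : A.IsSymm) (hA : ∀ w, w ⬝ᵥ A *ᵥ w ≤ 0) :
    ∃! v : Fin M → ℝ, ∀ i, g i (v i) = (A *ᵥ v) i := by
  obtain ⟨v, hv⟩ := exists_apply_eq_mulVec hκ hg hcont hAsymm hA
  refine ⟨v, hv, fun w hw => injective_apply_sub_mulVec hκ hg hA ?_⟩
  funext i
  simp [hv i, hw i]

end DiagonalMinusMatrix

lemma isStronglyMonotone_Hfun (b : ℝ) : IsStronglyMonotone (-1 / 2) fun a => Hfun a b := by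
  intro x y
  simp only [Hfun]
  nlinarith [mul_nonneg (sq_nonneg (x - y)) (add_nonneg (sq_nonneg (x + y)) (add_nonneg
    (sq_nonneg x) (sq_nonneg y))), mul_nonneg (sq_nonneg (x - y)) (sq_nonneg b)]

theorem existsUnique_implicit_step {M : ℕ} {θ : ℝ} (hθ : 1 / 2 < θ) (ε : ℝ)
    (D : Matrix (Fin M) (Fin M) ℝ) (hDsymm : D.IsSymm) (hDneg : ∀ w, w ⬝ᵥ D *ᵥ w ≤ 0)
    (S b : Fin M → ℝ) :
    ∃! w : Fin M → ℝ, ∀ i, S i + θ * (w i - b i)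
      = ε ^ 2 * (D *ᵥ fun j => (w j + b j) / 2) i - Hfun (w i) (b i) := by
  set A := (ε ^ 2 / 2) • D
  set g : Fin M → ℝ → ℝ := fun i x => S i + θ * (x - b i) + Hfun x (b i)
    - ε ^ 2 / 2 * (D *ᵥ b) i
  have hmid : ∀ w : Fin M → ℝ, ∀ i, ε ^ 2 * (D *ᵥ fun j => (w j + b j) / 2) i
      = (A *ᵥ w) i + ε ^ 2 / 2 * (D *ᵥ b) i := fun w i => by
    have : (fun j => (w j + b j) / 2) = (1 / 2 : ℝ) • (w + b) := by
      funext j; simp only [Pi.smul_apply, Pi.add_apply, smul_eq_mul]; ring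
    simp only [this, A, mulVec_smul, smul_mulVec, mulVec_add, Pi.smul_apply, Pi.add_apply,
      smul_eq_mul]
    ring
  have hg : ∀ i, IsStronglyMonotone (θ - 1 / 2) (g i) := fun i x y => by
    have := isStronglyMonotone_Hfun (b i) x y
    simp only [g]
    nlinarith
  have hcont : ∀ i, Continuous (g i) := fun i => by simp only [g, Hfun]; fun_prop
  have hA : ∀ w, w ⬝ᵥ A *ᵥ w ≤ 0 := fun w => by
    simpa [A, smul_mulVec, dotProduct_smul] using
      mul_nonpos_of_nonneg_of_nonpos (by positivity : 0 ≤ ε ^ 2 / 2) (hDneg w)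
  refine (existsUnique_congr fun w => forall_congr' fun i => ?_).2
    (existsUnique_apply_eq_mulVec (by linarith) hg hcont (hDsymm.smul _) hA)
  rw [hmid]
  simp only [g]
  constructor <;> intro h <;> linarith

theorem stmt18_general (α : ℝ) (hα0 : 0 < α)
    (N : ℕ) (t : ℕ → ℝ) (ht : ∀ k, k < N → t k < t (k + 1))
    (M : ℕ) (ε : ℝ)
    (D : Matrix (Fin M) (Fin M) ℝ) (hDsym : D.IsSymm)
    (hDneg : ∀ w : Fin M → ℝ, w ⬝ᵥ D.mulVec w ≤ 0)
    (n : ℕ) (hn1 : 1 ≤ n) (hnN : n ≤ N)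
    (hτ : ∀ k, 1 ≤ k → k ≤ N → t k - t (k - 1) < (2 * Real.Gamma (1 + α)) ^ (1 / α))
    (u : ℕ → Fin M → ℝ) :
    thetaK α t n n = Real.Gamma (1 + α) * (t n - t (n - 1)) ^ (-α) ∧
    1 / 2 < thetaK α t n n ∧
    ∃! un : Fin M → ℝ, ∀ i,
      (∑ j ∈ Finset.Icc 1 (n - 1), thetaK α t n j * (u j i - u (j - 1) i))
          + thetaK α t n n * (un i - u (n - 1) i)
        = ε ^ 2 * D.mulVec (fun j => (un j + u (n - 1) j) / 2) i
          - Hfun (un i) (u (n - 1) i) := by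
  have hstep : t (n - 1) < t n := by
    simpa [Nat.sub_add_cancel hn1] using ht (n - 1) (by omega)
  have hθ := thetaK_self_eq hα0 hstep.le
  have hhalf : 1 / 2 < thetaK α t n n := hθ ▸ one_half_lt_mul_rpow_neg hα0
    (Real.Gamma_pos_of_pos (by linarith)) (sub_pos.2 hstep) (hτ n hn1 hnN)
  exact ⟨hθ, hhalf, existsUnique_implicit_step hhalf ε D hDsym hDneg
    (fun i => ∑ j ∈ Finset.Icc 1 (n - 1), thetaK α t n j * (u j i - u (j - 1) i)) (u (n - 1))⟩

theorem stmt18 (α : ℝ) (hα0 : 0 < α) (hα1 : α < 1)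
    (N : ℕ) (t : ℕ → ℝ) (ht0 : t 0 = 0) (ht : ∀ k, k < N → t k < t (k + 1))
    (M : ℕ) (ε : ℝ) (hε : 0 < ε)
    (D : Matrix (Fin M) (Fin M) ℝ) (hDsym : D.IsSymm)
    (hDneg : ∀ w : Fin M → ℝ, w ⬝ᵥ D.mulVec w ≤ 0)
    (n : ℕ) (hn1 : 1 ≤ n) (hnN : n ≤ N)
    (hτ : ∀ k, 1 ≤ k → k ≤ N → t k - t (k - 1) < (2 * Real.Gamma (1 + α)) ^ (1 / α))
    (u : ℕ → Fin M → ℝ) :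
    thetaK α t n n = Real.Gamma (1 + α) * (t n - t (n - 1)) ^ (-α) ∧
    1 / 2 < thetaK α t n n ∧
    ∃! un : Fin M → ℝ, ∀ i,
      (∑ j ∈ Finset.Icc 1 (n - 1), thetaK α t n j * (u j i - u (j - 1) i))
          + thetaK α t n n * (un i - u (n - 1) i)
        = ε ^ 2 * D.mulVec (fun j => (un j + u (n - 1) j) / 2) i
          - Hfun (un i) (u (n - 1) i) :=
  stmt18_general α hα0 N t ht M ε D hDsym hDneg n hn1 hnN hτ u
end
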